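/- Fix a nonnegative integer n and reals α > 2, c > 0. Define p(D) = ∫_0^D γ(n+1, c x^α)·(2x/D²) dx / Γ(n+1). Then D²·(1 − p(D)) → c^{-2/α}·Γ(n+1+2/α)/Γ(n+1) as D → ∞. -/

import Mathlib

open Filter Topology

noncomputable def lowerGamma (a x : ℝ) : ℝ := ∫ s in (0:ℝ)..x, s ^ (a - 1) * Real.exp (-s)

/-!
Write `Γ(a, y) = Γ(a) - γ(a, y)` for the upper incomplete gamma function. Then
`D² (1 - p(D)) = (2 / Γ(n+1)) ∫₀ᴰ x Γ(n+1, c xᵅ) dx`, and integrating by parts against `x² / 2`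
splits this into the boundary term `D² Γ(n+1, c Dᵅ) / Γ(n+1)`, which vanishes because
`y^(2/α) Γ(n+1, y) ≤ Γ(n+1+2/α, y) → 0`, and `∫₀ᴰ x² (c xᵅ)ⁿ e^(-c xᵅ) c α x^(α-1) dx / Γ(n+1)`,
which after the substitution `u = c xᵅ` converges to `c^(-2/α) Γ(n+1+2/α) / Γ(n+1)`.
-/

open MeasureTheory Set Real

theorem integrableOn_rpow_sub_one_mul_exp_neg {a : ℝ} (ha : 0 < a) :
    IntegrableOn (fun s : ℝ => s ^ (a - 1) * exp (-s)) (Ioi 0) :=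
  (GammaIntegral_convergent ha).congr_fun (fun _ _ => mul_comm _ _) measurableSet_Ioi

theorem Gamma_eq_integral_rpow_sub_one_mul_exp_neg {a : ℝ} (ha : 0 < a) :
    Gamma a = ∫ s in Ioi 0, s ^ (a - 1) * exp (-s) := by
  simp only [Gamma_eq_integral ha, mul_comm]

theorem tendsto_lowerGamma_atTop {a : ℝ} (ha : 0 < a) :
    Tendsto (lowerGamma a) atTop (𝓝 (Gamma a)) := by
  rw [Gamma_eq_integral_rpow_sub_one_mul_exp_neg ha]
  exact intervalIntegral_tendsto_integral_Ioi 0 (integrableOn_rpow_sub_one_mul_exp_neg ha)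
    tendsto_id

theorem Gamma_sub_lowerGamma {a y : ℝ} (ha : 0 < a) (hy : 0 ≤ y) :
    Gamma a - lowerGamma a y = ∫ s in Ioi y, s ^ (a - 1) * exp (-s) := by
  have hint := integrableOn_rpow_sub_one_mul_exp_neg ha
  rw [Gamma_eq_integral_rpow_sub_one_mul_exp_neg ha, lowerGamma,
    ← intervalIntegral.integral_interval_add_Ioi hint (hint.mono_set (Ioi_subset_Ioi hy)),
    add_sub_cancel_left]

theorem tendsto_rpow_mul_Gamma_sub_lowerGamma {a p : ℝ} (ha : 0 < a) (hp : 0 ≤ p) :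
    Tendsto (fun y => y ^ p * (Gamma a - lowerGamma a y)) atTop (𝓝 0) := by
  have hap : 0 < a + p := by linarith
  have htail : Tendsto (fun y => Gamma (a + p) - lowerGamma (a + p) y) atTop (𝓝 0) := by
    simpa using (tendsto_lowerGamma_atTop hap).const_sub (Gamma (a + p))
  refine squeeze_zero' ?_ ?_ htail
  all_goals filter_upwards [eventually_ge_atTop 0] with y hy
  · rw [Gamma_sub_lowerGamma ha hy]
    exact mul_nonneg (rpow_nonneg hy p) (setIntegral_nonneg measurableSet_Ioi
      fun s hs => mul_nonneg (rpow_nonneg (hy.trans hs.le) _) (exp_pos _).le)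
  · rw [Gamma_sub_lowerGamma ha hy, Gamma_sub_lowerGamma hap hy, ← integral_const_mul]
    refine setIntegral_mono_on
      (((integrableOn_rpow_sub_one_mul_exp_neg ha).mono_set (Ioi_subset_Ioi hy)).const_mul _)
      ((integrableOn_rpow_sub_one_mul_exp_neg hap).mono_set (Ioi_subset_Ioi hy))
      measurableSet_Ioi fun s hs => ?_
    have hs0 : 0 < s := hy.trans_lt hs
    rw [show a + p - 1 = p + (a - 1) by ring, rpow_add hs0, mul_assoc]
    exact mul_le_mul_of_nonneg_right (rpow_le_rpow hy hs.le hp)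
      (mul_nonneg (rpow_nonneg hs0.le _) (exp_pos _).le)

theorem tendsto_sq_mul_Gamma_sub_lowerGamma_mul_rpow {a α c : ℝ} (ha : 0 < a) (hα : 0 < α)
    (hc : 0 < c) :
    Tendsto (fun D => D ^ 2 * (Gamma a - lowerGamma a (c * D ^ α))) atTop (𝓝 0) := by
  have h := ((tendsto_rpow_mul_Gamma_sub_lowerGamma ha (p := 2 / α) (by positivity)).comp
    ((tendsto_rpow_atTop hα).const_mul_atTop hc)).const_mul (c ^ (-(2 / α)))
  rw [mul_zero] at h
  refine h.congr' ?_
  filter_upwards [eventually_ge_atTop 0] with D hD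
  simp only [Function.comp_apply]
  rw [← mul_assoc, mul_rpow hc.le (rpow_nonneg hD α), ← rpow_mul hD,
    mul_div_cancel₀ _ hα.ne', ← mul_assoc, ← rpow_add hc, neg_add_cancel, rpow_zero, one_mul,
    rpow_two]

theorem lowerGamma_nat_add_one (n : ℕ) (y : ℝ) :
    lowerGamma (n + 1) y = ∫ s in (0:ℝ)..y, s ^ n * exp (-s) := by
  simp only [lowerGamma, add_sub_cancel_right, rpow_natCast]

theorem hasDerivAt_lowerGamma_nat_add_one (n : ℕ) (y : ℝ) :
    HasDerivAt (lowerGamma (n + 1)) (y ^ n * exp (-y)) y := by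
  have hf : Continuous fun s : ℝ => s ^ n * exp (-s) := by fun_prop
  rw [funext (lowerGamma_nat_add_one n)]
  exact (hf.integral_hasStrictDerivAt 0 y).hasDerivAt

theorem continuous_lowerGamma_nat_add_one (n : ℕ) : Continuous (lowerGamma (n + 1)) :=
  continuous_iff_continuousAt.2 fun y => (hasDerivAt_lowerGamma_nat_add_one n y).continuousAt

theorem integral_mul_Gamma_sub_lowerGamma_mul_rpow (n : ℕ) {α : ℝ} (hα : 1 ≤ α) (c D : ℝ) :
    ∫ x in (0:ℝ)..D, x * (Gamma (n + 1) - lowerGamma (n + 1) (c * x ^ α)) =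
      D ^ 2 / 2 * (Gamma (n + 1) - lowerGamma (n + 1) (c * D ^ α)) +
        ∫ x in (0:ℝ)..D,
          x ^ 2 / 2 * ((c * x ^ α) ^ n * exp (-(c * x ^ α)) * (c * (α * x ^ (α - 1)))) := by
  have hu : ∀ x : ℝ, HasDerivAt (fun x => Gamma (n + 1) - lowerGamma (n + 1) (c * x ^ α))
      (-((c * x ^ α) ^ n * exp (-(c * x ^ α)) * (c * (α * x ^ (α - 1))))) x := fun x =>
    (((hasDerivAt_lowerGamma_nat_add_one n _).comp x
      ((hasDerivAt_rpow_const (Or.inr hα)).const_mul c)).const_sub _)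
  have hv : ∀ x : ℝ, HasDerivAt (fun x : ℝ => x ^ 2 / 2) x x := fun x => by
    simpa using (hasDerivAt_pow 2 x).div_const 2
  have hu' : Continuous fun x : ℝ =>
      -((c * x ^ α) ^ n * exp (-(c * x ^ α)) * (c * (α * x ^ (α - 1)))) := by
    have := continuous_rpow_const (q := α) (by linarith)
    have := continuous_rpow_const (q := α - 1) (by linarith)
    fun_prop
  have hibp := intervalIntegral.integral_mul_deriv_eq_deriv_mul (fun x _ => hu x)
    (fun x _ => hv x) (hu'.intervalIntegrable 0 D) (continuous_id.intervalIntegrable 0 D)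
  simp only [zero_pow two_ne_zero, zero_div, mul_zero, sub_zero, neg_mul,
    intervalIntegral.integral_neg, sub_neg_eq_add] at hibp
  simpa only [mul_comm] using hibp

theorem sq_div_two_mul_deriv_lowerGamma_comp_eq (n : ℕ) (α c : ℝ) {x : ℝ} (hx : 0 < x) :
    x ^ 2 / 2 * ((c * x ^ α) ^ n * exp (-(c * x ^ α)) * (c * (α * x ^ (α - 1)))) =
      α * c ^ (n + 1) / 2 * (x ^ (α * (n + 1) + 1) * exp (-c * x ^ α)) := by
  have hpow : x ^ 2 * (x ^ α) ^ n * x ^ (α - 1) = x ^ (α * (n + 1) + 1) := by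
    rw [← rpow_natCast (x ^ α), ← rpow_mul hx.le, ← rpow_two, ← rpow_add hx, ← rpow_add hx]
    ring_nf
  rw [← hpow, neg_mul]
  ring

theorem tendsto_integral_sq_div_two_mul_deriv_lowerGamma_comp (n : ℕ) {α c : ℝ} (hα : 0 < α)
    (hc : 0 < c) :
    Tendsto (fun D => ∫ x in (0:ℝ)..D,
        x ^ 2 / 2 * ((c * x ^ α) ^ n * exp (-(c * x ^ α)) * (c * (α * x ^ (α - 1)))))
      atTop (𝓝 (c ^ (-2 / α) * Gamma (n + 1 + 2 / α) / 2)) := by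
  have hq : (-1 : ℝ) < α * (n + 1) + 1 := by linarith [show 0 ≤ α * (n + 1) by positivity]
  have heq := fun x (hx : x ∈ Ioi (0:ℝ)) => sq_div_two_mul_deriv_lowerGamma_comp_eq n α c hx
  have hint := IntegrableOn.congr_fun
    ((integrableOn_rpow_mul_exp_neg_mul_rpow hq hα hc).const_mul (α * c ^ (n + 1) / 2))
    (fun x hx => (heq x hx).symm) measurableSet_Ioi
  have hval : ∫ x in Ioi 0, x ^ 2 / 2 *
      ((c * x ^ α) ^ n * exp (-(c * x ^ α)) * (c * (α * x ^ (α - 1)))) =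
      c ^ (-2 / α) * Gamma (n + 1 + 2 / α) / 2 := by
    rw [setIntegral_congr_fun measurableSet_Ioi heq, integral_const_mul,
      integral_rpow_mul_exp_neg_mul_rpow hα hq hc,
      show (α * (n + 1) + 1 + 1) / α = n + 1 + 2 / α by field_simp; ring,
      show -(α * (n + 1) + 1 + 1) / α = -(n + 1) + -2 / α by field_simp; ring,
      rpow_add hc, rpow_neg hc.le, ← rpow_natCast, Nat.cast_add_one]
    field_simp
  simpa only [hval, id] using intervalIntegral_tendsto_integral_Ioi 0 hint tendsto_id

theorem sq_mul_one_sub_integral_lowerGamma_div_Gamma (n : ℕ) {α : ℝ} (hα : 0 ≤ α) (c : ℝ)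
    {D : ℝ} (hD : D ≠ 0) :
    D ^ 2 * (1 - (∫ x in (0:ℝ)..D, lowerGamma (n + 1) (c * x ^ α) * (2 * x / D ^ 2)) /
        Gamma (n + 1)) =
      2 / Gamma (n + 1) *
        ∫ x in (0:ℝ)..D, x * (Gamma (n + 1) - lowerGamma (n + 1) (c * x ^ α)) := by
  have hΓ : Gamma (n + 1) ≠ 0 := (Gamma_pos_of_pos (by positivity)).ne'
  have hcont : Continuous fun x : ℝ => x * lowerGamma (n + 1) (c * x ^ α) := by
    have := continuous_rpow_const (q := α) hα
    have := continuous_lowerGamma_nat_add_one n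
    fun_prop
  have hlower : ∫ x in (0:ℝ)..D, lowerGamma (n + 1) (c * x ^ α) * (2 * x / D ^ 2) =
      2 / D ^ 2 * ∫ x in (0:ℝ)..D, x * lowerGamma (n + 1) (c * x ^ α) := by
    rw [← intervalIntegral.integral_const_mul]
    exact intervalIntegral.integral_congr fun x _ => by ring
  have hupper : ∫ x in (0:ℝ)..D, x * (Gamma (n + 1) - lowerGamma (n + 1) (c * x ^ α)) =
      D ^ 2 / 2 * Gamma (n + 1) - ∫ x in (0:ℝ)..D, x * lowerGamma (n + 1) (c * x ^ α) := by
    simp only [mul_sub]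
    rw [intervalIntegral.integral_sub ((continuous_mul_const _).intervalIntegrable 0 D)
      (hcont.intervalIntegrable 0 D), intervalIntegral.integral_mul_const, integral_id]
    ring
  rw [hlower, hupper]
  field_simp

theorem stmt13 (n : ℕ) (α c : ℝ) (hα : 2 < α) (hc : 0 < c) :
    Tendsto
      (fun D : ℝ => D ^ 2 *
        (1 - (∫ x in (0:ℝ)..D, lowerGamma (n + 1) (c * x ^ α) * (2 * x / D ^ 2)) /
          Real.Gamma (n + 1)))
      atTop (nhds (c ^ (-2 / α) * Real.Gamma (n + 1 + 2 / α) / Real.Gamma (n + 1))) := by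
  have hα0 : 0 < α := by linarith
  have hboundary :=
    tendsto_sq_mul_Gamma_sub_lowerGamma_mul_rpow (a := n + 1) (by positivity) hα0 hc
  have hbulk := tendsto_integral_sq_div_two_mul_deriv_lowerGamma_comp n hα0 hc
  have hlim := ((hboundary.div_const 2).add hbulk).const_mul (2 / Gamma (n + 1))
  rw [show c ^ (-2 / α) * Gamma (n + 1 + 2 / α) / Gamma (n + 1) =
    2 / Gamma (n + 1) * (0 / 2 + c ^ (-2 / α) * Gamma (n + 1 + 2 / α) / 2) by ring]
  refine hlim.congr' ?_
  filter_upwards [eventually_ne_atTop 0] with D hD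
  rw [sq_mul_one_sub_integral_lowerGamma_div_Gamma n hα0.le c hD,
    integral_mul_Gamma_sub_lowerGamma_mul_rpow n (by linarith) c D]
  ring
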